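/- arXiv:1510.07081 — 5 statements merged into one kernel-verified Lean document; each statement's English description precedes it below -/
import Mathlib

section
/- If n starts a run of 7 consecutive positive integers each having exactly k divisors, where k > 4, 4 | k and 3 ∤ k, then n ≡ 5 (mod 8). -/
lemma aux_mod8 (m : ℕ) (hm : m % 8 = 4) : 3 ∣ m.divisors.card := by
  obtain ⟨t, ht⟩ : 4 ∣ m := by omega
  have hodd : Odd t := by
    rcases Nat.even_or_odd t with he | ho
    · obtain ⟨s, hs⟩ := he; omega
    · exact ho
  have hcop : Nat.Coprime 4 t := by
    have : Nat.Coprime 2 t := Nat.coprime_two_left.mpr hodd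
    have := this.pow_left 2
    simpa using this
  rw [ht, Nat.Coprime.card_divisors_mul hcop]
  have h4 : (4:ℕ).divisors.card = 3 := by decide
  rw [h4]
  exact Dvd.intro _ rfl

theorem stmt_6 (k n : ℕ) (hk : 4 < k) (h4 : 4 ∣ k) (h3 : ¬ 3 ∣ k) (hn : 0 < n)
    (h : ∀ i < 7, (n + i).divisors.card = k) : n % 8 = 5 := by
  have key : ∀ i < 7, (n + i) % 8 ≠ 4 := by
    intro i hi hmod
    exact h3 (h i hi ▸ aux_mod8 _ hmod)
  have k0 := key 0 (by norm_num)
  have k1 := key 1 (by norm_num)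
  have k2 := key 2 (by norm_num)
  have k3 := key 3 (by norm_num)
  have k4 := key 4 (by norm_num)
  have k5 := key 5 (by norm_num)
  have k6 := key 6 (by norm_num)
  omega
end

section
/- Let p > 3 be prime. There do not exist four consecutive positive integers each having exactly 2p divisors; i.e., M(2p) ≤ 3. -/
open Finset

private lemma odd_sq_mod8 {z : ℕ} (hz : Odd z) : z ^ 2 % 8 = 1 := by
  obtain ⟨t, rfl⟩ := hz
  obtain ⟨u, hu⟩ := Nat.even_mul_succ_self t
  have h : (2 * t + 1) ^ 2 = 4 * (t * (t + 1)) + 1 := by ring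
  rw [hu] at h
  omega

private lemma card_divisors_pp {q : ℕ} (k : ℕ) (hq : q.Prime) :
    (q ^ k).divisors.card = k + 1 := by
  rw [Nat.divisors_prime_pow hq, Finset.card_map, Finset.card_range]

private lemma tau_prime_eq_pow {b : ℕ} (hb : 0 < b) (hP : (b.divisors.card).Prime) :
    ∃ q, q.Prime ∧ b = q ^ (b.divisors.card - 1) := by
  have hb1 : b ≠ 1 := by
    rintro rfl
    rw [Nat.divisors_one] at hP
    norm_num at hP
  have hcard := Nat.card_divisors hb.ne'
  obtain ⟨q, hq⟩ := Nat.nonempty_primeFactors.2 (by omega : 1 < b)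
  have hqp : q.Prime := Nat.prime_of_mem_primeFactors hq
  have heq0 : b.factorization q ≠ 0 := by
    rw [← Finsupp.mem_support_iff, Nat.support_factorization]; exact hq
  have hsplit : (b.factorization q + 1) * ∏ x ∈ b.primeFactors.erase q, (b.factorization x + 1)
      = ∏ x ∈ b.primeFactors, (b.factorization x + 1) := by
    simpa using Finset.mul_prod_erase b.primeFactors (fun x => b.factorization x + 1) hq
  have hdvd : (b.factorization q + 1) ∣ b.divisors.card := by
    rw [hcard, ← hsplit]; exact dvd_mul_right _ _
  have hEq : b.factorization q + 1 = b.divisors.card := by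
    rcases (Nat.Prime.eq_one_or_self_of_dvd hP _ hdvd) with h | h
    · omega
    · exact h
  have hR : ∏ x ∈ b.primeFactors.erase q, (b.factorization x + 1) = 1 := by
    have h1 : b.divisors.card * (∏ x ∈ b.primeFactors.erase q, (b.factorization x + 1))
        = b.divisors.card := by
      conv_rhs => rw [hcard, ← hsplit, hEq]
    exact Nat.eq_of_mul_eq_mul_left hP.pos (by rw [h1, mul_one])
  have key : ∀ {d : ℕ}, d.Prime → d ∣ b → d = q := by
    intro d hd hdb
    by_contra hne
    have hdmem : d ∈ b.primeFactors := Nat.mem_primeFactors.2 ⟨hd, hdb, hb.ne'⟩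
    have hdvd1 : (b.factorization d + 1) ∣ ∏ x ∈ b.primeFactors.erase q, (b.factorization x + 1) :=
      Finset.dvd_prod_of_mem (fun x => b.factorization x + 1)
        (Finset.mem_erase.2 ⟨hne, hdmem⟩)
    rw [hR] at hdvd1
    have hd0 : b.factorization d ≠ 0 := by
      rw [← Finsupp.mem_support_iff, Nat.support_factorization]; exact hdmem
    have := Nat.dvd_one.1 hdvd1
    omega
  have hbl := Nat.eq_prime_pow_of_unique_prime_dvd hb.ne' key
  refine ⟨q, hqp, ?_⟩
  have hc : b.divisors.card = b.primeFactorsList.length + 1 := by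
    conv_lhs => rw [hbl]
    rw [card_divisors_pp _ hqp]
  rw [hc]
  simpa using hbl

private lemma q_pow_eq_two_pow_add_one {q k s : ℕ} (hq3 : 3 ≤ q) (hqo : Odd q) (hk : 2 ≤ k)
    (h : q ^ k = 2 ^ s + 1) : q = 3 ∧ k = 2 ∧ s = 3 := by
  rcases Nat.even_or_odd k with hke | hko
  · obtain ⟨r, rfl⟩ := hke
    have hr1 : 1 ≤ r := by omega
    have hz3 : 3 ≤ q ^ r := le_trans hq3 (Nat.le_self_pow (by omega) q)
    have hsq : (q ^ r) ^ 2 = 2 ^ s + 1 := by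
      rw [← pow_mul, show r * 2 = r + r by ring]; exact h
    obtain ⟨w, hwz⟩ : ∃ w, q ^ r = w + 1 := ⟨q ^ r - 1, by omega⟩
    have hw2 : 2 ≤ w := by omega
    have hprod : w * (w + 2) = 2 ^ s := by
      rw [hwz] at hsq; ring_nf at hsq ⊢; omega
    have hwd : w ∣ 2 ^ s := ⟨w + 2, hprod.symm⟩
    have hwd2 : (w + 2) ∣ 2 ^ s := ⟨w, by rw [← hprod]; ring⟩
    obtain ⟨u, hus, hwu⟩ := (Nat.dvd_prime_pow Nat.prime_two).1 hwd
    obtain ⟨v, hvs, hwv⟩ := (Nat.dvd_prime_pow Nat.prime_two).1 hwd2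
    have hu1 : 1 ≤ u := by
      rcases Nat.eq_zero_or_pos u with rfl | h'
      · simp at hwu; omega
      · exact h'
    have hu : u = 1 := by
      by_contra hne
      have hu2 : 2 ≤ u := by omega
      have h4w : 4 ∣ w :=
        ⟨2 ^ (u - 2), by rw [hwu, show u = 2 + (u - 2) by omega, pow_add]; norm_num⟩
      have hv2 : 2 ≤ v := by
        by_contra hv'
        have : 2 ^ v ≤ 2 ^ 1 := Nat.pow_le_pow_right (by omega) (by omega)
        omega
      have h4v : 4 ∣ w + 2 :=
        ⟨2 ^ (v - 2), by rw [hwv, show v = 2 + (v - 2) by omega, pow_add]; norm_num⟩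
      omega
    have hwval : w = 2 := by rw [hwu, hu]; norm_num
    have hzval : q ^ r = 3 := by omega
    have hqle : q ≤ q ^ r := Nat.le_self_pow (by omega) q
    have hq' : q = 3 := by omega
    subst hq'
    have hr' : r = 1 := by
      have : (3:ℕ) ^ r = 3 ^ 1 := by rw [hzval]; norm_num
      exact Nat.pow_right_injective (by norm_num) this
    subst hr'
    have hs : 2 ^ s = 2 ^ 3 := by omega
    have : s = 3 := Nat.pow_right_injective (by norm_num) hs
    omega
  · exfalso
    have hk3 : 3 ≤ k := by have := Nat.odd_iff.1 hko; omega
    set G : ℕ := ∑ i ∈ Finset.range k, q ^ i with hG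
    have hgeom : (G : ℤ) * ((q : ℤ) - 1) = (q : ℤ) ^ k - 1 := by
      rw [hG]; push_cast; exact geom_sum_mul _ _
    have h2s : (q : ℤ) ^ k - 1 = 2 ^ s := by
      have : (q : ℤ) ^ k = 2 ^ s + 1 := by exact_mod_cast h
      omega
    have hdvd : (G : ℤ) ∣ (2 : ℤ) ^ s := ⟨(q : ℤ) - 1, by rw [← h2s, ← hgeom]⟩
    have hGdvd : G ∣ 2 ^ s := by
      have h3 : ((2 : ℤ) ^ s).natAbs = 2 ^ s := by rw [Int.natAbs_pow]; rfl
      have h4 := Int.natAbs_dvd_natAbs.2 hdvd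
      rwa [h3, Int.natAbs_natCast] at h4
    have hGodd : G % 2 = 1 := by
      rw [hG, Finset.sum_nat_mod]
      have hall : ∀ i ∈ Finset.range k, q ^ i % 2 = 1 := fun i _ => Nat.odd_iff.1 hqo.pow
      rw [Finset.sum_congr rfl hall]
      simp [Nat.odd_iff.1 hko]
    have hGk : k ≤ G := by
      calc k = ∑ i ∈ Finset.range k, 1 := by simp
      _ ≤ G := Finset.sum_le_sum (fun i _ => Nat.one_le_pow _ _ (by omega))
    have hcop : G.Coprime (2 ^ s) := by
      apply Nat.Coprime.pow_right
      apply Nat.coprime_comm.1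
      exact (Nat.prime_two.coprime_iff_not_dvd).2 (by omega)
    have := hcop.eq_one_of_dvd hGdvd
    omega

private lemma q_pow_add_one_ne_two_pow {q k s : ℕ} (hq3 : 3 ≤ q) (hqo : Odd q) (hk : 2 ≤ k)
    (h : q ^ k + 1 = 2 ^ s) : False := by
  rcases Nat.even_or_odd k with hke | hko
  · obtain ⟨r, rfl⟩ := hke
    have hr1 : 1 ≤ r := by omega
    have hz3 : 3 ≤ q ^ r := le_trans hq3 (Nat.le_self_pow (by omega) q)
    have h8 : (q ^ r) ^ 2 % 8 = 1 := odd_sq_mod8 hqo.pow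
    have hsq : (q ^ r) ^ 2 + 1 = 2 ^ s := by
      rw [← pow_mul, show r * 2 = r + r by ring]; exact h
    have h9 : 9 ≤ (q ^ r) ^ 2 := by nlinarith
    have hs3 : 3 ≤ s := by
      by_contra h'
      have : 2 ^ s ≤ 2 ^ 2 := Nat.pow_le_pow_right (by omega) (by omega)
      omega
    have h8d : (8 : ℕ) ∣ 2 ^ s :=
      ⟨2 ^ (s - 3), by rw [show s = 3 + (s - 3) by omega, pow_add]; norm_num⟩
    omega
  · have hk3 : 3 ≤ k := by have := Nat.odd_iff.1 hko; omega
    set S : ℤ := ∑ i ∈ Finset.range k, (-(q : ℤ)) ^ i with hS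
    have hgeom := geom_sum_mul (-(q : ℤ)) k
    rw [Odd.neg_pow hko] at hgeom
    have hSq : S * ((q : ℤ) + 1) = (q : ℤ) ^ k + 1 := by
      rw [hS]; linear_combination -hgeom
    have h2s : (q : ℤ) ^ k + 1 = 2 ^ s := by exact_mod_cast h
    have hdvd : S ∣ (2 : ℤ) ^ s := ⟨(q : ℤ) + 1, by rw [← h2s, ← hSq]⟩
    have hqoz : Odd (q : ℤ) := by exact_mod_cast hqo
    have hSodd : S % 2 = 1 := by
      rw [hS, Finset.sum_int_mod]
      have hall : ∀ i ∈ Finset.range k, (-(q : ℤ)) ^ i % 2 = 1 :=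
        fun i _ => Int.odd_iff.1 (hqoz.neg.pow)
      rw [Finset.sum_congr rfl hall]
      have := Nat.odd_iff.1 hko
      simp
      omega
    have hSpos : 0 < S := by
      by_contra h'
      push_neg at h'
      have h1 : S * ((q : ℤ) + 1) ≤ 0 :=
        mul_nonpos_of_nonpos_of_nonneg h' (by positivity)
      have h2 : (0 : ℤ) < (q : ℤ) ^ k + 1 := by positivity
      omega
    have hS1 : S ≠ 1 := by
      intro h1
      rw [h1, one_mul] at hSq
      have : (q : ℕ) ^ k = q ^ 1 := by
        have : (q : ℤ) ^ k = (q : ℤ) := by omega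
        exact_mod_cast (by rw [pow_one]; exact_mod_cast this : (q:ℕ)^k = (q:ℕ)^1)
      have := Nat.pow_right_injective (by omega) this
      omega
    have hnat : S.natAbs ∣ 2 ^ s := by
      have h3 : ((2 : ℤ) ^ s).natAbs = 2 ^ s := by rw [Int.natAbs_pow]; rfl
      have h4 := Int.natAbs_dvd_natAbs.2 hdvd
      rwa [h3] at h4
    have hodd : ¬ (2 ∣ S.natAbs) := by
      have h1 : Odd S := Int.odd_iff.2 hSodd
      have h2 : Odd S.natAbs := Int.natAbs_odd.2 h1
      have := Nat.odd_iff.1 h2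
      omega
    have hcop : S.natAbs.Coprime (2 ^ s) := by
      apply Nat.Coprime.pow_right
      apply Nat.coprime_comm.1
      exact (Nat.prime_two.coprime_iff_not_dvd).2 hodd
    have h1 := hcop.eq_one_of_dvd hnat
    rcases Int.natAbs_eq_iff.1 h1 with h2 | h2 <;> omega

private lemma key_dio {q b c k : ℕ} (hq : q.Prime) (hqo : Odd q) (hbo : Odd b)
    (hb : b = 1 ∨ b.Prime) (hk : 2 ≤ k) (hc : c = 2 * k - 1 ∨ c = 4 * k)
    (h : q ^ (2 * k) = 2 ^ c * b + 1) : False := by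
  have hq2 := hq.two_le
  have hqne2 : q ≠ 2 := by
    rintro rfl
    have := Nat.odd_iff.1 hqo
    omega
  have hq3 : 3 ≤ q := by omega
  have hz9 : 9 ≤ q ^ k := by
    calc (9 : ℕ) = 3 ^ 2 := by norm_num
    _ ≤ 3 ^ k := Nat.pow_le_pow_right (by norm_num) hk
    _ ≤ q ^ k := Nat.pow_le_pow_left hq3 k
  obtain ⟨w, hwz⟩ : ∃ w, q ^ k = w + 1 := ⟨q ^ k - 1, by omega⟩
  have hw8 : 8 ≤ w := by omega
  have hsq : (q ^ k) ^ 2 = 2 ^ c * b + 1 := by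
    rw [← pow_mul, show k * 2 = 2 * k by ring]; exact h
  have hprod : w * (w + 2) = 2 ^ c * b := by
    rw [hwz] at hsq; ring_nf at hsq ⊢; omega
  obtain ⟨α, a', ha'o, hwa⟩ := Nat.exists_eq_two_pow_mul_odd (n := w) (by omega)
  obtain ⟨β, b', hb'o, hwb⟩ := Nat.exists_eq_two_pow_mul_odd (n := w + 2) (by omega)
  have hab : a' * b' = b := by
    have d1 : a' * b' ∣ 2 ^ c * b := by
      rw [← hprod]
      exact mul_dvd_mul ⟨2 ^ α, by rw [hwa]; ring⟩ ⟨2 ^ β, by rw [hwb]; ring⟩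
    have hcop : (a' * b').Coprime (2 ^ c) := by
      apply Nat.Coprime.pow_right
      apply Nat.coprime_comm.1
      apply (Nat.prime_two.coprime_iff_not_dvd).2
      have := Nat.odd_iff.1 (ha'o.mul hb'o)
      omega
    have d1' : a' * b' ∣ b := hcop.dvd_of_dvd_mul_left d1
    have d2 : b ∣ 2 ^ (α + β) * (a' * b') := by
      have hw2 : w * (w + 2) = 2 ^ (α + β) * (a' * b') := by
        rw [hwb, hwa, pow_add]; ring
      rw [← hw2, hprod]
      exact dvd_mul_left _ _
    have hcop2 : b.Coprime (2 ^ (α + β)) := by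
      apply Nat.Coprime.pow_right
      apply Nat.coprime_comm.1
      apply (Nat.prime_two.coprime_iff_not_dvd).2
      have := Nat.odd_iff.1 hbo
      omega
    have d2' : b ∣ a' * b' := hcop2.dvd_of_dvd_mul_left d2
    exact Nat.dvd_antisymm d1' d2'
  have hcase : b' = 1 ∨ a' = 1 := by
    rcases hb with rfl | hbp
    · exact Or.inl (Nat.eq_one_of_mul_eq_one_left hab)
    · rcases hbp.eq_one_or_self_of_dvd a' ⟨b', hab.symm⟩ with h1 | h1
      · right; exact h1
      · left
        apply Nat.eq_of_mul_eq_mul_left hbp.pos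
        rw [mul_one]
        rw [h1] at hab
        exact hab
  rcases hcase with h1 | h1
  · apply q_pow_add_one_ne_two_pow hq3 hqo hk (s := β)
    have : w + 2 = 2 ^ β := by rw [hwb, h1, mul_one]
    omega
  · have hw2pow : q ^ k = 2 ^ α + 1 := by
      have : w = 2 ^ α := by rw [hwa, h1, mul_one]
      omega
    obtain ⟨hq', hk', hα⟩ := q_pow_eq_two_pow_add_one hq3 hqo hk hw2pow
    subst hq' hk'
    norm_num at h
    rcases hc with rfl | rfl
    · norm_num at h
      have := Nat.odd_iff.1 hbo
      omega
    · norm_num at h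
      omega

private lemma dvd_two_mul_prime {p d : ℕ} (hp : p.Prime) (hd : d ∣ 2 * p) :
    d = 1 ∨ d = 2 ∨ d = p ∨ d = 2 * p := by
  rcases Nat.even_or_odd d with he | ho
  · obtain ⟨e, rfl⟩ := he
    have h2 : 2 * e ∣ 2 * p := by
      have : e + e = 2 * e := by ring
      rwa [this] at hd
    have he' : e ∣ p := (Nat.mul_dvd_mul_iff_left (by norm_num : 0 < 2)).1 h2
    rcases hp.eq_one_or_self_of_dvd e he' with rfl | rfl
    · right; left; omega
    · right; right; right; omega
  · have hcop : d.Coprime 2 := by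
      apply Nat.coprime_comm.1
      exact (Nat.prime_two.coprime_iff_not_dvd).2 (by have := Nat.odd_iff.1 ho; omega)
    have hdp : d ∣ p := hcop.dvd_of_dvd_mul_left hd
    rcases hp.eq_one_or_self_of_dvd d hdp with rfl | rfl
    · tauto
    · tauto

private lemma even_classify {p : ℕ} (hp : p.Prime) (hp3 : 3 < p) {m : ℕ} (hm : 0 < m)
    (hme : 2 ∣ m) (hτ : m.divisors.card = 2 * p) :
    (m % 16 = 2 ∧ ∃ q, q.Prime ∧ Odd q ∧ m = 2 * q ^ (p - 1)) ∨
    (m % 16 = 0 ∧ ∃ c b, (c = p - 2 ∨ c = 2 * p - 2) ∧ Odd b ∧ (b = 1 ∨ b.Prime) ∧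
      m = 2 ^ (c + 1) * b) := by
  have hpodd : p % 2 = 1 := Nat.odd_iff.1 (hp.odd_of_ne_two (by omega))
  obtain ⟨a, b, hbo, rfl⟩ := Nat.exists_eq_two_pow_mul_odd hm.ne'
  have hbpos : 0 < b := hbo.pos
  have hb2 : ¬ 2 ∣ b := by have := Nat.odd_iff.1 hbo; omega
  have hco : Nat.Coprime (2 ^ a) b :=
    Nat.Coprime.pow_left _ ((Nat.prime_two.coprime_iff_not_dvd).2 hb2)
  have hτm : (a + 1) * b.divisors.card = 2 * p := by
    rw [← hτ, Nat.Coprime.card_divisors_mul hco, card_divisors_pp _ Nat.prime_two]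
  have ha1 : 1 ≤ a := by
    by_contra h'
    have ha0 : a = 0 := by omega
    subst ha0
    rw [pow_zero, one_mul] at hme
    exact hb2 hme
  have hdvd : (a + 1) ∣ 2 * p := ⟨_, hτm.symm⟩
  rcases dvd_two_mul_prime hp hdvd with h' | h' | h' | h'
  · omega
  · -- a = 1
    have ha : a = 1 := by omega
    subst ha
    have hτb : b.divisors.card = p := by omega
    obtain ⟨q, hqp, hbq⟩ := tau_prime_eq_pow hbpos (by rw [hτb]; exact hp)
    rw [hτb] at hbq
    have hqodd : Odd q := by
      rcases Nat.even_or_odd q with he | ho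
      · exfalso
        apply hb2
        rw [hbq]
        exact dvd_pow he.two_dvd (by omega)
      · exact ho
    left
    constructor
    · obtain ⟨j, hj⟩ : ∃ j, p - 1 = 2 * j := ⟨(p - 1) / 2, by omega⟩
      have h8 : q ^ (p - 1) % 8 = 1 := by
        rw [hj, mul_comm 2 j, pow_mul]
        exact odd_sq_mod8 hqodd.pow
      rw [hbq]
      omega
    · exact ⟨q, hqp, hqodd, by rw [hbq]; ring⟩
  · -- a + 1 = p
    have hτb : b.divisors.card = 2 := by
      rw [h'] at hτm
      apply Nat.eq_of_mul_eq_mul_left hp.pos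
      rw [hτm]; ring
    obtain ⟨q, hqp, hbq⟩ := tau_prime_eq_pow hbpos (by rw [hτb]; exact Nat.prime_two)
    rw [hτb, pow_one] at hbq
    have ha : a = p - 1 := by omega
    right
    have ha4 : 4 ≤ a := by omega
    constructor
    · rw [show a = 4 + (a - 4) by omega, pow_add]
      have : 2 ^ 4 * 2 ^ (a - 4) * b = 16 * (2 ^ (a - 4) * b) := by ring
      rw [this]
      omega
    · exact ⟨p - 2, b, Or.inl rfl, hbo, Or.inr (hbq ▸ hqp), by
        rw [show p - 2 + 1 = a by omega]⟩
  · -- a + 1 = 2p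
    have hτb : b.divisors.card = 1 := by
      rw [h'] at hτm
      apply Nat.eq_of_mul_eq_mul_left (show 0 < 2 * p by omega)
      rw [hτm]; ring
    have hb1 : b = 1 := by
      have h1 : (1 : ℕ) ∈ b.divisors := Nat.one_mem_divisors.2 hbpos.ne'
      have h2 : b ∈ b.divisors := Nat.mem_divisors_self b hbpos.ne'
      obtain ⟨x, hx⟩ := Finset.card_eq_one.1 hτb
      rw [hx, Finset.mem_singleton] at h1 h2
      omega
    subst hb1
    have ha : a = 2 * p - 1 := by omega
    right
    have ha4 : 4 ≤ a := by omega
    constructor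
    · rw [show a = 4 + (a - 4) by omega, pow_add]
      have : 2 ^ 4 * 2 ^ (a - 4) * 1 = 16 * (2 ^ (a - 4) * 1) := by ring
      rw [this]
      omega
    · exact ⟨2 * p - 2, 1, Or.inr rfl, odd_one, Or.inl rfl, by
        rw [show 2 * p - 2 + 1 = a by omega]⟩

theorem stmt_7 (p : ℕ) (hp : p.Prime) (hp3 : 3 < p) :
    ¬ ∃ n : ℕ, 0 < n ∧ ∀ i < 4, (n + i).divisors.card = 2 * p := by
  rintro ⟨n, hn, h⟩
  have hpodd : p % 2 = 1 := Nat.odd_iff.1 (hp.odd_of_ne_two (by omega))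
  have h0 := h 0 (by norm_num)
  have h1 := h 1 (by norm_num)
  have h2 := h 2 (by norm_num)
  have h3 := h 3 (by norm_num)
  obtain ⟨m, hmpos, hmdvd, hτ1, hτ2⟩ :
      ∃ m, 0 < m ∧ 2 ∣ m ∧ m.divisors.card = 2 * p ∧ (m + 2).divisors.card = 2 * p := by
    rcases Nat.even_or_odd n with he | ho
    · exact ⟨n, hn, he.two_dvd, by simpa using h0, by simpa using h2⟩
    · refine ⟨n + 1, by omega, by have := Nat.odd_iff.1 ho; omega, by simpa using h1, ?_⟩
      have : n + 1 + 2 = n + 3 := by ring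
      rw [this]
      simpa using h3
  rcases even_classify hp hp3 hmpos hmdvd hτ1 with ⟨hmod, _⟩ | ⟨hmod, c, b, hc, hbo, hb, hmeq⟩
  · rcases even_classify hp hp3 (by omega) (by omega) hτ2 with ⟨hmod2, _⟩ | ⟨hmod2, _⟩ <;> omega
  · rcases even_classify hp hp3 (by omega) (by omega) hτ2 with
      ⟨hmod2, q, hqp, hqo, hmeq2⟩ | ⟨hmod2, _⟩
    · have key : q ^ (p - 1) = 2 ^ c * b + 1 := by
        have heq : 2 * (2 ^ c * b) + 2 = 2 * q ^ (p - 1) := by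
          rw [← hmeq2, hmeq, pow_succ]
          ring
        omega
      obtain ⟨j, hj⟩ : ∃ j, p - 1 = 2 * j := ⟨(p - 1) / 2, by omega⟩
      rw [hj] at key
      exact key_dio hqp hqo hbo hb (by omega) (by omega) key
    · omega
end

section
/- If n starts a run of 5 consecutive positive integers each having exactly 18 divisors, then 3 divides n + 2. -/
lemma sqmod3 (a : ℕ) : a*a % 3 = 0 ∨ a*a % 3 = 1 := by
  have h := Nat.mul_mod a a 3
  rcases (by omega : a % 3 = 0 ∨ a % 3 = 1 ∨ a % 3 = 2) with h'|h'|h' <;> rw [h'] at h <;> omega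

lemma sqmod4 (a : ℕ) : a*a % 4 = 0 ∨ a*a % 4 = 1 := by
  have h := Nat.mul_mod a a 4
  rcases (by omega : a % 4 = 0 ∨ a % 4 = 1 ∨ a % 4 = 2 ∨ a % 4 = 3) with h'|h'|h'|h' <;>
    rw [h'] at h <;> omega

lemma sqmod8odd (a : ℕ) (ha : a % 2 = 1) : a*a % 8 = 1 := by
  have h := Nat.mul_mod a a 8
  have h2 : a % 8 % 2 = a % 2 := Nat.mod_mod_of_dvd a (by norm_num)
  rcases (by omega : a % 8 = 1 ∨ a % 8 = 3 ∨ a % 8 = 5 ∨ a % 8 = 7) with h'|h'|h'|h' <;>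
    rw [h'] at h <;> omega

lemma tau_prime_pow {p : ℕ} (pp : p.Prime) (e : ℕ) : (p^e).divisors.card = e + 1 := by
  rw [Nat.divisors_prime_pow pp, Finset.card_map, Finset.card_range]

lemma tau_eq_one {m : ℕ} (hm : m ≠ 0) (h : m.divisors.card = 1) : m = 1 := by
  rcases Finset.card_eq_one.mp h with ⟨d, hd⟩
  have h1 : (1:ℕ) ∈ m.divisors := Nat.one_mem_divisors.mpr hm
  have h2 : m ∈ m.divisors := Nat.mem_divisors_self m hm
  rw [hd, Finset.mem_singleton] at h1 h2
  omega

lemma tau_split {p : ℕ} (pp : p.Prime) {m : ℕ} (hm : m ≠ 0) :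
    ∃ e k, m = p^e * k ∧ ¬ p ∣ k ∧ k ≠ 0 ∧
      m.divisors.card = (e+1) * k.divisors.card ∧ e = m.factorization p := by

  refine ⟨m.factorization p, m / p ^ m.factorization p,
    (Nat.ordProj_mul_ordCompl_eq_self m p).symm, Nat.not_dvd_ordCompl pp hm,
    (Nat.ordCompl_pos p hm).ne', ?_, rfl⟩
  have hcop : (p ^ m.factorization p).Coprime (m / p ^ m.factorization p) :=
    Nat.Coprime.pow_left _ ((Nat.Prime.coprime_iff_not_dvd pp).mpr (Nat.not_dvd_ordCompl pp hm))
  conv_lhs => rw [← Nat.ordProj_mul_ordCompl_eq_self m p]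
  rw [hcop.card_divisors_mul, tau_prime_pow pp]

lemma sq_of_odd_tau {k : ℕ} (hk : k ≠ 0) (h : Odd k.divisors.card) : ∃ a, k = a * a := by
  have hcard := Nat.card_divisors hk
  have heven : ∀ p ∈ k.primeFactors, Even (k.factorization p) := by
    intro p hp
    rw [hcard] at h
    have hdvd : k.factorization p + 1 ∣ k.primeFactors.prod (k.factorization · + 1) :=
      Finset.dvd_prod_of_mem _ hp
    rcases Nat.even_or_odd (k.factorization p) with he | ho
    · exact he
    · exfalso
      have h2 : 2 ∣ k.factorization p + 1 := by
        rcases ho with ⟨t, ht⟩; exact ⟨t+1, by omega⟩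
      have : 2 ∣ k.primeFactors.prod (k.factorization · + 1) := h2.trans hdvd
      exact (Nat.not_even_iff_odd.mpr h) (even_iff_two_dvd.mpr this)
  refine ⟨k.factorization.prod fun p e => p ^ (e / 2), ?_⟩
  conv_lhs => rw [← Nat.factorization_prod_pow_eq_self hk]
  rw [Finsupp.prod, Finsupp.prod, ← Finset.prod_mul_distrib]
  apply Finset.prod_congr rfl
  intro p hp
  rw [← pow_add]
  congr 1
  have := heven p (by rwa [Nat.support_factorization] at hp)
  rcases this with ⟨t, ht⟩
  omega

lemma tauA {m : ℕ} (hm : m % 4 = 2) (h : m.divisors.card = 18) :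
    ∃ a, a % 2 = 1 ∧ m = 2 * (a * a) := by
  have hm0 : m ≠ 0 := by omega
  obtain ⟨e, k, hmk, hpk, hk0, hcard, -⟩ := tau_split Nat.prime_two hm0
  have hk2 : k % 2 = 1 := by omega
  have he1 : e = 1 := by
    rcases e with _ | _ | e
    · simp at hmk; omega
    · rfl
    · exfalso
      have : 4 ∣ m := ⟨2^e * k, by rw [hmk]; ring⟩
      omega
  subst he1
  rw [h] at hcard
  have hk9 : k.divisors.card = 9 := by omega
  obtain ⟨a, ha⟩ := sq_of_odd_tau hk0 (by rw [hk9]; decide)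
  refine ⟨a, ?_, by rw [hmk, ha]; ring⟩
  have h1 : a * a % 2 = 1 := by rw [← ha]; exact hk2
  have hmod := Nat.mul_mod a a 2
  rcases (by omega : a % 2 = 0 ∨ a % 2 = 1) with h' | h'
  · rw [h'] at hmod; omega
  · exact h'

lemma tauB {m : ℕ} (hm0 : m ≠ 0) (h : m.divisors.card = 18) (h3 : 3 ∣ m) (h9 : ¬ 9 ∣ m) :
    ∃ b, m = 3 * (b * b) := by
  obtain ⟨e, k, hmk, hpk, hk0, hcard, -⟩ := tau_split Nat.prime_three hm0
  have he1 : e = 1 := by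
    rcases e with _ | _ | e
    · exfalso; apply hpk; simpa [hmk] using h3
    · rfl
    · exfalso; apply h9; exact ⟨3^e * k, by rw [hmk]; ring⟩
  subst he1
  rw [h] at hcard
  have hk9 : k.divisors.card = 9 := by omega
  obtain ⟨b, hb⟩ := sq_of_odd_tau hk0 (by rw [hk9]; decide)
  exact ⟨b, by rw [hmk, hb]; ring⟩

lemma tauC {m : ℕ} (h : m.divisors.card = 18) (h16 : 16 ∣ m) (h3 : 3 ∣ m) :
    m = 288 ∨ m = 768 := by
  have hm0 : m ≠ 0 := by rintro rfl; simp at h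
  obtain ⟨e, k, hmk, hpk, hk0, hcard, hef⟩ := tau_split Nat.prime_two hm0
  have he4 : 4 ≤ e := by
    rw [hef]
    exact (Nat.Prime.pow_dvd_iff_le_factorization Nat.prime_two hm0).mp (by norm_num at h16 ⊢; exact h16)
  have h3k : 3 ∣ k := by
    rcases (Nat.Prime.dvd_mul Nat.prime_three).mp (hmk ▸ h3) with h' | h'
    · exact absurd (Nat.Prime.dvd_of_dvd_pow Nat.prime_three h') (by norm_num)
    · exact h'
  obtain ⟨f, j, hkj, hpj, hj0, hcard2, -⟩ := tau_split Nat.prime_three hk0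
  have hf1 : 1 ≤ f := by
    rcases f with _ | f
    · exfalso; apply hpj; simpa [hkj] using h3k
    · omega
  rw [h, hcard2] at hcard
  have hdvd : (e + 1) ∣ 18 := ⟨_, hcard⟩
  have he17 : e ≤ 17 := by
    have := Nat.le_of_dvd (by norm_num) hdvd; omega
  have he : e = 5 ∨ e = 8 ∨ e = 17 := by
    interval_cases e <;> revert hdvd <;> decide
  rcases he with rfl | rfl | rfl
  · -- (f+1) * tau j = 3
    have : (f + 1) * j.divisors.card = 3 := by omega
    have hf : f = 2 ∧ j.divisors.card = 1 := by
      have hd : (f+1) ∣ 3 := ⟨_, this.symm⟩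
      have hle : f ≤ 2 := by have := Nat.le_of_dvd (by norm_num) hd; omega
      interval_cases f <;> omega
    have hj1 : j = 1 := tau_eq_one hj0 hf.2
    left; rw [hmk, hkj, hf.1, hj1]; norm_num
  · have : (f + 1) * j.divisors.card = 2 := by omega
    have hf : f = 1 ∧ j.divisors.card = 1 := by
      have hd : (f+1) ∣ 2 := ⟨_, this.symm⟩
      have hle : f ≤ 1 := by have := Nat.le_of_dvd (by norm_num) hd; omega
      interval_cases f <;> omega
    have hj1 : j = 1 := tau_eq_one hj0 hf.2
    right; rw [hmk, hkj, hf.1, hj1]; norm_num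
  · exfalso
    have : k.divisors.card = 1 := by omega
    have := tau_eq_one hk0 this
    omega

lemma nine_dvd {a m : ℕ} (hm : m = 2*(a*a)) (h3 : 3 ∣ m) : 9 ∣ m := by
  have h3a : 3 ∣ a := by
    have h' : (3:ℕ) ∣ 2 * (a * a) := hm ▸ h3
    rcases (Nat.Prime.dvd_mul Nat.prime_three).mp h' with h'' | h''
    · norm_num at h''
    · rcases (Nat.Prime.dvd_mul Nat.prime_three).mp h'' with h3 | h3 <;> exact h3
  rcases h3a with ⟨t, rfl⟩
  exact ⟨2*(t*t), by rw [hm]; ring⟩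

set_option maxRecDepth 40000 in
lemma tau289 : (289:ℕ).divisors.card = 3 := by decide

set_option maxRecDepth 40000 in
lemma tau769 : (769:ℕ).divisors.card = 2 := by decide

theorem stmt_13 (n : ℕ) (hn : 0 < n) (h : ∀ i < 5, (n + i).divisors.card = 18) :
    3 ∣ (n + 2) := by
  have k0 := h 0 (by norm_num)
  have k1 := h 1 (by norm_num)
  have k2 := h 2 (by norm_num)
  have k3 := h 3 (by norm_num)
  have k4 := h 4 (by norm_num)
  rw [Nat.add_zero] at k0
  by_contra hc
  have hn3 : n % 3 = 0 ∨ n % 3 = 2 := by omega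
  have hmod4 : n % 4 ≠ 2 := by
    intro hm
    obtain ⟨a, ha2, ha⟩ := tauA (m := n) (by omega) k0
    obtain ⟨c, hc2, hcEq⟩ := tauA (m := n+4) (by omega) k4
    have hca : c * c = a * a + 2 := by omega
    have ha1 : 1 ≤ a := by omega
    rcases le_or_gt c a with hle | hlt
    · nlinarith
    · nlinarith
  have hn4 : n % 4 = 0 ∨ n % 4 = 1 ∨ n % 4 = 3 := by omega
  rcases hn4 with h4' | h4' | h4'
  · -- n ≡ 0 mod 4 : n+2 = 2a²
    obtain ⟨a, ha2, ha⟩ := tauA (m := n+2) (by omega) k2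
    rcases hn3 with h3' | h3'
    · -- n ≡ 0 mod 3 : 16 ∣ n, 3 ∣ n → n ∈ {288, 768}
      have h8 := sqmod8odd a ha2
      have h16 : 16 ∣ n := by omega
      rcases tauC k0 h16 (by omega) with rfl | rfl
      · have := tau289; norm_num at k1; omega
      · have := tau769; norm_num at k1; omega
    · -- n ≡ 2 mod 3 : 3 ∣ n+1
      by_cases h9 : 9 ∣ n + 1
      · obtain ⟨b, hb⟩ := tauB (m := n+4) (by omega) k4 (by omega) (by omega)
        have hs := sqmod3 a
        omega
      · obtain ⟨b, hb⟩ := tauB (m := n+1) (by omega) k1 (by omega) h9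
        have hs := sqmod4 b
        omega
  · -- n ≡ 1 mod 4 : n+1 = 2a²
    obtain ⟨a, ha2, ha⟩ := tauA (m := n+1) (by omega) k1
    rcases hn3 with h3' | h3'
    · -- n ≡ 0 mod 3
      by_cases h9 : 9 ∣ n
      · obtain ⟨b, hb⟩ := tauB (m := n+3) (by omega) k3 (by omega) (by omega)
        have hs := sqmod3 a
        omega
      · obtain ⟨b, hb⟩ := tauB (m := n) (by omega) k0 (by omega) h9
        have hs := sqmod4 b
        omega
    · -- n ≡ 2 mod 3 : 3 ∣ n+1 → 9 ∣ n+1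
      have h9 : 9 ∣ n + 1 := nine_dvd ha (by omega)
      obtain ⟨b, hb⟩ := tauB (m := n+4) (by omega) k4 (by omega) (by omega)
      have hs := sqmod4 b
      omega
  · -- n ≡ 3 mod 4 : n+3 = 2a²
    obtain ⟨a, ha2, ha⟩ := tauA (m := n+3) (by omega) k3
    rcases hn3 with h3' | h3'
    · -- n ≡ 0 mod 3 : 3 ∣ n+3 → 9 ∣ n+3
      have h9 : 9 ∣ n + 3 := nine_dvd ha (by omega)
      obtain ⟨b, hb⟩ := tauB (m := n) (by omega) k0 (by omega) (by omega)
      have hs := sqmod3 b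
      omega
    · -- n ≡ 2 mod 3 : 16 ∣ n+1, 3 ∣ n+1
      have h8 := sqmod8odd a ha2
      have h16 : 16 ∣ n + 1 := by omega
      rcases tauC k1 h16 (by omega) with h' | h'
      · have hn' : n = 287 := by omega
        subst hn'
        have := tau289; norm_num at k2; omega
      · have hn' : n = 767 := by omega
        subst hn'
        have := tau769; norm_num at k2; omega
end

section
/- The number n = 17476613 starts a run of 7 consecutive integers each having exactly 16 divisors: τ(17476613 + i) = 16 for 0 ≤ i ≤ 6. -/
lemma tauP {p : ℕ} (hp : p.Prime) : p.divisors.card = 2 := by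
  rw [hp.divisors]
  rw [Finset.card_pair hp.one_lt.ne]

lemma tauPP {p : ℕ} (hp : p.Prime) (k : ℕ) : (p ^ k).divisors.card = k + 1 := by
  rw [Nat.divisors_prime_pow hp, Finset.card_map, Finset.card_range]

theorem stmt_15 : ∀ i < 7, ((17476613 : ℕ) + i).divisors.card = 16 := by
  have h7 : Nat.Prime 7 := by norm_num
  intro i hi
  interval_cases i
  · show (17476613 : ℕ).divisors.card = 16
    have : (17476613 : ℕ) = 7 * 11 * 263 * 863 := by norm_num
    rw [this, Nat.Coprime.card_divisors_mul (by norm_num),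
      Nat.Coprime.card_divisors_mul (by norm_num),
      Nat.Coprime.card_divisors_mul (by norm_num),
      tauP (by norm_num), tauP (by norm_num), tauP (by norm_num), tauP (by norm_num)]
  · show (17476614 : ℕ).divisors.card = 16
    have : (17476614 : ℕ) = 2 * 3 ^ 3 * 323641 := by norm_num
    rw [this, Nat.Coprime.card_divisors_mul (by norm_num),
      Nat.Coprime.card_divisors_mul (by norm_num),
      tauP (by norm_num), tauPP (by norm_num), tauP (by norm_num)]
  · show (17476615 : ℕ).divisors.card = 16
    have : (17476615 : ℕ) = 5 * 13 * 67 * 4013 := by norm_num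
    rw [this, Nat.Coprime.card_divisors_mul (by norm_num),
      Nat.Coprime.card_divisors_mul (by norm_num),
      Nat.Coprime.card_divisors_mul (by norm_num),
      tauP (by norm_num), tauP (by norm_num), tauP (by norm_num), tauP (by norm_num)]
  · show (17476616 : ℕ).divisors.card = 16
    have : (17476616 : ℕ) = 2 ^ 3 * 797 * 2741 := by norm_num
    rw [this, Nat.Coprime.card_divisors_mul (by norm_num),
      Nat.Coprime.card_divisors_mul (by norm_num),
      tauPP (by norm_num), tauP (by norm_num), tauP (by norm_num)]
  · show (17476617 : ℕ).divisors.card = 16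
    have : (17476617 : ℕ) = 3 * 37 * 79 * 1993 := by norm_num
    rw [this, Nat.Coprime.card_divisors_mul (by norm_num),
      Nat.Coprime.card_divisors_mul (by norm_num),
      Nat.Coprime.card_divisors_mul (by norm_num),
      tauP (by norm_num), tauP (by norm_num), tauP (by norm_num), tauP (by norm_num)]
  · show (17476618 : ℕ).divisors.card = 16
    have : (17476618 : ℕ) = 2 * 19 * 29 * 15859 := by norm_num
    rw [this, Nat.Coprime.card_divisors_mul (by norm_num),
      Nat.Coprime.card_divisors_mul (by norm_num),
      Nat.Coprime.card_divisors_mul (by norm_num),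
      tauP (by norm_num), tauP (by norm_num), tauP (by norm_num), tauP (by norm_num)]
  · show (17476619 : ℕ).divisors.card = 16
    have : (17476619 : ℕ) = 23 * 41 * 43 * 431 := by norm_num
    rw [this, Nat.Coprime.card_divisors_mul (by norm_num),
      Nat.Coprime.card_divisors_mul (by norm_num),
      Nat.Coprime.card_divisors_mul (by norm_num),
      tauP (by norm_num), tauP (by norm_num), tauP (by norm_num), tauP (by norm_num)]
end

section
/- The integers 7939375, 7939376, 7939377 each have exactly 10 divisors, and no four consecutive positive integers can each have exactly 10 divisors. -/
lemma tau_pp {p : ℕ} (pp : p.Prime) (k : ℕ) : (p ^ k).divisors.card = k + 1 := by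
  rw [Nat.divisors_prime_pow pp, Finset.card_map, Finset.card_range]

lemma tau_eq_prime {b r : ℕ} (hb : b ≠ 0) (hr : r.Prime) (h : b.divisors.card = r) :
    ∃ p, p.Prime ∧ b = p ^ (r - 1) := by
  rw [Nat.card_divisors hb] at h
  have hall : ∀ p ∈ b.primeFactors, b.factorization p + 1 = r := by
    intro p hp
    have hdvd : b.factorization p + 1 ∣ r := h ▸ Finset.dvd_prod_of_mem _ hp
    have hpos : b.factorization p ≠ 0 := by
      rwa [← Finsupp.mem_support_iff, Nat.support_factorization]
    rcases hr.eq_one_or_self_of_dvd _ hdvd with h1 | h1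
    · omega
    · exact h1
  have hcard : r ^ b.primeFactors.card = r := by
    rw [← Finset.prod_const, ← Finset.prod_congr rfl hall]
    exact h
  have hc1 : b.primeFactors.card = 1 :=
    Nat.pow_right_injective hr.two_le (hcard.trans (pow_one r).symm)
  obtain ⟨p, hps⟩ := Finset.card_eq_one.mp hc1
  have hpmem : p ∈ b.primeFactors := hps ▸ Finset.mem_singleton_self p
  refine ⟨p, Nat.prime_of_mem_primeFactors hpmem, ?_⟩
  have hself := Nat.factorization_prod_pow_eq_self hb
  rw [Finsupp.prod, Nat.support_factorization, hps, Finset.prod_singleton] at hself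
  have he : b.factorization p + 1 = r := hall p hpmem
  rw [← hself]
  congr 1
  omega

lemma tau_split_s16 (m : ℕ) (hm : m ≠ 0) :
    m = 2 ^ (m.factorization 2) * (m / 2 ^ (m.factorization 2)) ∧
    (m / 2 ^ (m.factorization 2)) % 2 = 1 ∧
    m.divisors.card = (m.factorization 2 + 1) * (m / 2 ^ (m.factorization 2)).divisors.card := by
  have h1 := Nat.ordProj_mul_ordCompl_eq_self m 2
  have hodd : ¬ 2 ∣ m / 2 ^ (m.factorization 2) := Nat.not_dvd_ordCompl Nat.prime_two hm
  refine ⟨h1.symm, by omega, ?_⟩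
  have hcop : (2 ^ (m.factorization 2)).Coprime (m / 2 ^ (m.factorization 2)) :=
    Nat.Coprime.pow_left _ ((Nat.Prime.coprime_iff_not_dvd Nat.prime_two).mpr hodd)
  calc m.divisors.card
      = (2 ^ (m.factorization 2) * (m / 2 ^ (m.factorization 2))).divisors.card := by rw [h1]
    _ = (2 ^ (m.factorization 2)).divisors.card * (m / 2 ^ (m.factorization 2)).divisors.card :=
        hcop.card_divisors_mul
    _ = (m.factorization 2 + 1) * (m / 2 ^ (m.factorization 2)).divisors.card := by
        rw [tau_pp Nat.prime_two]

lemma structA {m : ℕ} (hm : m % 4 = 2) (h : m.divisors.card = 10) :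
    ∃ p, p.Prime ∧ p % 2 = 1 ∧ m = 2 * p ^ 4 := by
  have hm0 : m ≠ 0 := by omega
  obtain ⟨heq, hodd, htau⟩ := tau_split_s16 m hm0
  set a := m.factorization 2 with ha
  set b := m / 2 ^ a with hbdef
  have ha1 : a = 1 := by
    have h2 : 2 ^ 1 ∣ m := by omega
    have h4 : ¬ 2 ^ 2 ∣ m := by omega
    have hle : 1 ≤ a := (Nat.Prime.pow_dvd_iff_le_factorization Nat.prime_two hm0).mp h2
    have hge : ¬ 2 ≤ a := fun hc =>
      h4 ((Nat.Prime.pow_dvd_iff_le_factorization Nat.prime_two hm0).mpr hc)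
    omega
  rw [ha1] at htau heq
  have hb10 : b.divisors.card = 5 := by omega
  have hbne : b ≠ 0 := by intro hc; rw [hc] at heq; omega
  obtain ⟨p, hp, hbp⟩ := tau_eq_prime hbne (by norm_num) hb10
  refine ⟨p, hp, ?_, by rw [heq, hbp]; ring⟩
  rcases Nat.Prime.eq_two_or_odd hp with h2 | h2
  · exfalso; rw [h2] at hbp; norm_num at hbp; omega
  · exact h2

lemma structB {m : ℕ} (hm : m % 4 = 0) (hm0 : m ≠ 0) (h : m.divisors.card = 10) :
    (∃ q, q.Prime ∧ m = 16 * q) ∨ m = 512 := by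
  obtain ⟨heq, hodd, htau⟩ := tau_split_s16 m hm0
  set a := m.factorization 2 with ha
  set b := m / 2 ^ a with hbdef
  have hbne : b ≠ 0 := by intro hc; rw [hc] at heq; omega
  have ha2 : 2 ≤ a := by
    have h4 : 2 ^ 2 ∣ m := by omega
    exact (Nat.Prime.pow_dvd_iff_le_factorization Nat.prime_two hm0).mp h4
  have hbpos : 1 ≤ b.divisors.card := by
    refine Finset.card_pos.mpr ⟨1, Nat.one_mem_divisors.mpr hbne⟩
  have hale : a ≤ 9 := by nlinarith
  interval_cases a
  · omega
  · omega
  · -- a = 4, τ b = 2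
    have hb2 : b.divisors.card = 2 := by omega
    obtain ⟨q, hq, hbq⟩ := tau_eq_prime hbne (by norm_num) hb2
    left; exact ⟨q, hq, by rw [heq, hbq]; norm_num⟩
  · omega
  · omega
  · omega
  · omega
  · -- a = 9, τ b = 1
    have hb1 : b.divisors.card = 1 := by omega
    have hbeq : b = 1 := by
      by_contra hb1'
      have h1b : ({1, b} : Finset ℕ) ⊆ b.divisors := by
        intro x hx
        simp only [Finset.mem_insert, Finset.mem_singleton] at hx
        rcases hx with rfl | rfl
        · exact Nat.one_mem_divisors.mpr hbne
        · exact Nat.mem_divisors_self b hbne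
      have := Finset.card_le_card h1b
      rw [Finset.card_insert_of_notMem (by simpa using Ne.symm hb1'), Finset.card_singleton] at this
      omega
    right; rw [heq, hbeq]; norm_num

lemma pow4_mod16 {p : ℕ} (hp : p % 2 = 1) : p ^ 4 % 16 = 1 := by
  have h1 : p ^ 4 % 16 = (p % 16) ^ 4 % 16 := by rw [Nat.pow_mod]
  have h2 : p % 16 % 2 = 1 := by omega
  have h3 : p % 16 < 16 := Nat.mod_lt _ (by norm_num)
  rw [h1]
  set r := p % 16
  interval_cases r <;> simp_all

lemma core {m0 m2 : ℕ} (h0 : m0 % 4 = 0) (h2 : m2 % 4 = 2)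
    (hd : m0 = m2 + 2 ∨ m2 = m0 + 2) (hm0 : m0 ≠ 0)
    (t0 : m0.divisors.card = 10) (t2 : m2.divisors.card = 10) : False := by
  obtain ⟨p, hp, hpodd, hm2⟩ := structA h2 t2
  have hp16 := pow4_mod16 hpodd
  rcases structB h0 hm0 t0 with ⟨q, hq, hm0q⟩ | h512
  · rcases hd with hd | hd
    · -- 16 q = 2 p^4 + 2, so 8 q = p^4 + 1 ≡ 2 mod 16, contradiction
      omega
    · -- 2 p^4 = 16 q + 2, so p^4 = 8q + 1, 16 ∣ 8q, q even, q = 2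
      have hq2 : q = 2 := by
        have : q % 2 = 0 := by omega
        rcases hq.eq_two_or_odd with h | h
        · exact h
        · omega
      subst hq2
      rw [hm0q, show (16 * 2 : ℕ) = 2 ^ 5 by norm_num, tau_pp Nat.prime_two] at t0
      omega
  · -- m0 = 512, p^4 = 255 or 257
    have hb : p ^ 4 ≤ 257 := by omega
    have hple : p ≤ 4 := by
      by_contra hc
      push_neg at hc
      have : 5 ^ 4 ≤ p ^ 4 := Nat.pow_le_pow_left (by omega) 4
      omega
    have := hp.two_le
    interval_cases p <;> norm_num at hm2 <;> omega

lemma tau_pq {p q : ℕ} (k : ℕ) (hp : p.Prime) (hq : q.Prime) (hne : p ≠ q) :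
    (p ^ k * q).divisors.card = (k + 1) * 2 := by
  have hc : (p ^ k).Coprime q := Nat.Coprime.pow_left _ ((Nat.coprime_primes hp hq).mpr hne)
  rw [hc.card_divisors_mul, tau_pp hp, ← pow_one q, tau_pp hq]

theorem stmt_16 :
    ((7939375 : ℕ).divisors.card = 10 ∧ (7939376 : ℕ).divisors.card = 10 ∧
      (7939377 : ℕ).divisors.card = 10) ∧
    ¬ ∃ n : ℕ, 0 < n ∧ ∀ i < 4, (n + i).divisors.card = 10 := by
  constructor
  · refine ⟨?_, ?_, ?_⟩
    · rw [show (7939375 : ℕ) = 5 ^ 4 * 12703 by norm_num,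
        tau_pq 4 (by norm_num) (by norm_num) (by norm_num)]
    · rw [show (7939376 : ℕ) = 2 ^ 4 * 496211 by norm_num,
        tau_pq 4 (by norm_num) (by norm_num) (by norm_num)]
    · rw [show (7939377 : ℕ) = 3 ^ 4 * 98017 by norm_num,
        tau_pq 4 (by norm_num) (by norm_num) (by norm_num)]
  · rintro ⟨n, hn, h⟩
    have h0 := h 0 (by norm_num)
    have h1 := h 1 (by norm_num)
    have h2 := h 2 (by norm_num)
    have h3 := h 3 (by norm_num)
    have h4 : n % 4 = 0 ∨ n % 4 = 1 ∨ n % 4 = 2 ∨ n % 4 = 3 := by omega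
    rcases h4 with hr | hr | hr | hr
    · exact core (m0 := n) (m2 := n + 2) (by omega) (by omega) (by omega) (by omega) (by simpa using h0) h2
    · exact core (m0 := n + 3) (m2 := n + 1) (by omega) (by omega) (by omega) (by omega) h3 h1
    · exact core (m0 := n + 2) (m2 := n) (by omega) (by omega) (by omega) (by omega) h2 (by simpa using h0)
    · exact core (m0 := n + 1) (m2 := n + 3) (by omega) (by omega) (by omega) (by omega) h1 h3
end
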